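/- arXiv:0905.1271 — 6 statements merged into one kernel-verified Lean document; each statement's English description precedes it below -/
import Mathlib

section
/- For every positive integer n ≥ 1, q(n) is not a power of 2 if and only if there exist positive integers s and t with 2^s < t < 2^(s+1), such that 2^s divides n and t does not divide n. -/
/-- `q n` is the least integer `m ≥ 2` that does not divide `n`. -/
noncomputable def leastNonDivisor (n : ℕ) : ℕ := sInf {m : ℕ | 2 ≤ m ∧ ¬ m ∣ n}

/-! If `q n` is not a power of two, it lies strictly between `2 ^ s` and `2 ^ (s + 1)`, and `2 ^ s`,
being smaller, divides `n`. Conversely, if `2 ^ s ∣ n` and some `t < 2 ^ (s + 1)` does not divide `n`,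
then `q n ≤ t`, so a power `2 ^ k = q n` would have `k ≤ s` and hence divide `n`. -/

namespace leastNonDivisor

variable {m n : ℕ}

theorem two_le_and_not_dvd (hn : n ≠ 0) : 2 ≤ leastNonDivisor n ∧ ¬ leastNonDivisor n ∣ n :=
  Nat.sInf_mem (s := {m : ℕ | 2 ≤ m ∧ ¬ m ∣ n})
    ⟨n + 1, by omega, fun h => by have := Nat.le_of_dvd (by omega) h; omega⟩

theorem le_of_not_dvd (hm : 2 ≤ m) (h : ¬ m ∣ n) : leastNonDivisor n ≤ m :=
  Nat.sInf_le ⟨hm, h⟩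

theorem dvd_of_lt (hm : 2 ≤ m) (h : m < leastNonDivisor n) : m ∣ n := by
  by_contra hdvd
  exact Nat.notMem_of_lt_sInf h ⟨hm, hdvd⟩

end leastNonDivisor

theorem Nat.exists_pow_lt_lt_pow_succ {b q : ℕ} (hb : 1 < b) (hq : b ≤ q)
    (hpow : ¬ ∃ k, 1 ≤ k ∧ q = b ^ k) : ∃ s, 1 ≤ s ∧ b ^ s < q ∧ q < b ^ (s + 1) := by
  have hq0 : q ≠ 0 := by omega
  have hlog : 1 ≤ Nat.log b q := (Nat.le_log_iff_pow_le hb hq0).mpr (by simpa using hq)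
  refine ⟨Nat.log b q, hlog, ?_, Nat.lt_pow_succ_log_self hb q⟩
  exact (Nat.pow_log_le_self b hq0).lt_of_ne fun h => hpow ⟨Nat.log b q, hlog, h.symm⟩

theorem leastNonDivisor_not_pow_two_iff (n : ℕ) (hn : 1 ≤ n) :
    (¬ ∃ k : ℕ, 1 ≤ k ∧ leastNonDivisor n = 2 ^ k) ↔
      ∃ s t : ℕ, 1 ≤ s ∧ 1 ≤ t ∧ 2 ^ s < t ∧ t < 2 ^ (s + 1) ∧ 2 ^ s ∣ n ∧ ¬ t ∣ n := by
  obtain ⟨hq2, hqn⟩ := leastNonDivisor.two_le_and_not_dvd (n := n) (by omega)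
  constructor
  · intro hpow
    obtain ⟨s, hs, hsq, hqs⟩ := Nat.exists_pow_lt_lt_pow_succ one_lt_two hq2 hpow
    have hdvd : 2 ^ s ∣ n :=
      leastNonDivisor.dvd_of_lt (by simpa using Nat.pow_le_pow_right two_pos hs) hsq
    exact ⟨s, _, hs, by omega, hsq, hqs, hdvd, hqn⟩
  · rintro ⟨s, t, -, -, hst, hts, hsn, htn⟩ ⟨k, -, hqk⟩
    have hqt : 2 ^ k ≤ t := hqk ▸ leastNonDivisor.le_of_not_dvd (by omega) htn
    have hks : k ≤ s := Nat.lt_succ_iff.mp <|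
      (Nat.pow_lt_pow_iff_right (a := 2) (by norm_num)).mp (hqt.trans_lt hts)
    exact hqk ▸ hqn <| (pow_dvd_pow 2 hks).trans hsn
end

section
/- The language L_AM = { a^n : q(n) is a power of 2 } is nonregular; equivalently, the set S = { n ∈ ℕ : q(n) is a power of 2 } is such that the characteristic sequence of S is not eventually periodic. -/
/-- A set of naturals is eventually periodic. -/
def EventuallyPeriodic (S : Set ℕ) : Prop :=
  ∃ N d : ℕ, 1 ≤ d ∧ ∀ n : ℕ, N ≤ n → (n ∈ S ↔ n + d ∈ S)

section EventuallyPeriodic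

variable {S : Set ℕ} {N d : ℕ}

lemma mem_iff_add_mul_mem (h : ∀ n, N ≤ n → (n ∈ S ↔ n + d ∈ S)) {a : ℕ} (ha : N ≤ a)
    (k : ℕ) : a ∈ S ↔ a + k * d ∈ S := by
  induction k with
  | zero => simp
  | succ k ih => rw [ih, h _ (ha.trans (Nat.le_add_right _ _)), add_one_mul, add_assoc]

lemma mem_iff_of_modEq (h : ∀ n, N ≤ n → (n ∈ S ↔ n + d ∈ S)) {a b : ℕ} (ha : N ≤ a)
    (hb : N ≤ b) (hab : a ≡ b [MOD d]) : a ∈ S ↔ b ∈ S := by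
  wlog hle : a ≤ b generalizing a b
  · exact (this hb ha hab.symm (le_of_not_ge hle)).symm
  obtain ⟨k, hk⟩ := (Nat.modEq_iff_dvd' hle).mp hab
  rw [mem_iff_add_mul_mem h ha k, mul_comm, ← hk, Nat.add_sub_cancel' hle]

end EventuallyPeriodic

section leastNonDivisor

variable {n j m : ℕ}

lemma leastNonDivisor_zero : leastNonDivisor 0 = 0 := by
  simp [leastNonDivisor]

lemma leastNonDivisor_eq_of (hm : 2 ≤ m) (hdvd : ∀ j, 2 ≤ j → j < m → j ∣ n)
    (hmn : ¬ m ∣ n) : leastNonDivisor n = m :=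
  IsLeast.csInf_eq ⟨⟨hm, hmn⟩, fun j ⟨hj, hjn⟩ => not_lt.mp fun hjm => hjn (hdvd j hj hjm)⟩

lemma dvd_of_lt_leastNonDivisor (hj : j ≠ 0) (hjn : j < leastNonDivisor n) : j ∣ n := by
  by_contra hnd
  obtain rfl | hj2 : j = 1 ∨ 2 ≤ j := by omega
  · exact hnd (one_dvd n)
  · exact (Nat.sInf_le ⟨hj2, hnd⟩ : leastNonDivisor n ≤ j).not_gt hjn

lemma le_of_lt_leastNonDivisor (hjn : j < leastNonDivisor n) : j ≤ n := by
  rcases Nat.eq_zero_or_pos j with rfl | hj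
  · exact Nat.zero_le n
  rcases Nat.eq_zero_or_pos n with rfl | hn
  · simp [leastNonDivisor_zero] at hjn
  · exact Nat.le_of_dvd hn (dvd_of_lt_leastNonDivisor hj.ne' hjn)

/-- A number below `p ^ (k + 1)` is `p ^ e * j'` with `e ≤ k` and `j'` one of the factors of the
product, while `p` divides none of them. -/
lemma leastNonDivisor_primePow_mul_prod {p : ℕ} (hp : p.Prime) (k : ℕ) :
    leastNonDivisor (p ^ k * ∏ j ∈ (Finset.range (p ^ (k + 1))).filter (¬ p ∣ ·), j) =
      p ^ (k + 1) := by
  refine leastNonDivisor_eq_of (hp.two_le.trans (Nat.le_self_pow k.succ_ne_zero p)) ?_ ?_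
  · intro j hj hjlt
    obtain ⟨e, j', hpj', rfl⟩ := Nat.exists_eq_pow_mul_and_not_dvd (by omega : j ≠ 0) p hp.ne_one
    have hj'0 : j' ≠ 0 := by rintro rfl; exact hpj' (dvd_zero p)
    have he : e ≤ k := by
      have : p ^ e < p ^ (k + 1) :=
        (Nat.le_mul_of_pos_right _ (Nat.pos_of_ne_zero hj'0)).trans_lt hjlt
      exact Nat.lt_succ_iff.mp ((Nat.pow_lt_pow_iff_right hp.one_lt).mp this)
    have hj'lt : j' < p ^ (k + 1) :=
      (Nat.le_mul_of_pos_left j' (pow_pos hp.pos e)).trans_lt hjlt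
    exact mul_dvd_mul (pow_dvd_pow p he)
      (Finset.dvd_prod_of_mem _ (Finset.mem_filter.mpr ⟨Finset.mem_range.mpr hj'lt, hpj'⟩))
  · intro hdvd
    rw [pow_succ, Nat.mul_dvd_mul_iff_left (pow_pos hp.pos k)] at hdvd
    obtain ⟨j, hj, hpj⟩ := (Prime.dvd_finsetProd_iff hp.prime _).mp hdvd
    exact (Finset.mem_filter.mp hj).2 hpj

lemma exists_leastNonDivisor_eq_of_isPrimePow (hm : IsPrimePow m) :
    ∃ n, leastNonDivisor n = m := by
  obtain ⟨p, k, hp, hk, rfl⟩ := (isPrimePow_nat_iff m).mp hm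
  obtain ⟨k, rfl⟩ := Nat.exists_eq_succ_of_ne_zero hk.ne'
  exact ⟨_, leastNonDivisor_primePow_mul_prod hp k⟩

end leastNonDivisor

theorem altMehlhorn_not_eventuallyPeriodic :
    ¬ EventuallyPeriodic {n : ℕ | 1 ≤ n ∧ ∃ k : ℕ, 1 ≤ k ∧ leastNonDivisor n = 2 ^ k} := by
  rintro ⟨N, d, hd, hper⟩
  obtain ⟨p, hpN, hp⟩ := Nat.exists_infinite_primes (N + d + 3)
  have hp2 : p < 2 ^ p := Nat.lt_two_pow_self
  obtain ⟨a, ha⟩ :=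
    exists_leastNonDivisor_eq_of_isPrimePow (Nat.prime_two.isPrimePow.pow hp.ne_zero)
  obtain ⟨b, hb⟩ := exists_leastNonDivisor_eq_of_isPrimePow hp.isPrimePow
  have hab : a ≡ b [MOD d] :=
    (Nat.modEq_zero_iff_dvd.mpr (dvd_of_lt_leastNonDivisor (by omega) (by omega))).trans
      (Nat.modEq_zero_iff_dvd.mpr (dvd_of_lt_leastNonDivisor (by omega) (by omega))).symm
  have key := mem_iff_of_modEq hper (le_of_lt_leastNonDivisor (by omega))
    (le_of_lt_leastNonDivisor (by omega)) hab
  have ha_mem : 1 ≤ a ∧ ∃ k, 1 ≤ k ∧ leastNonDivisor a = 2 ^ k :=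
    ⟨le_of_lt_leastNonDivisor (by omega), p, hp.one_le, ha⟩
  obtain ⟨-, k, hk, hpk⟩ := key.mp ha_mem
  have h2p : 2 ∣ p := hb ▸ hpk ▸ dvd_pow_self 2 (by omega)
  have hp_eq_two := (Nat.prime_dvd_prime_iff_eq Nat.prime_two hp).mp h2p
  omega
end

section
/- The set S₀ = { n ∈ ℕ : ∃ t ≥ 1 such that p_1, ..., p_t all divide n, none of p_1², ..., p_t² divides n, and p_{t+1} does not divide n } has a characteristic sequence that is not eventually periodic (so the unary language { a^n : n ∈ S₀ } is nonregular). -/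
/-- `S₀`: there is `t ≥ 1` such that the first `t` primes divide `n`, none of their
squares divides `n`, and the `(t+1)`-st prime does not divide `n`.
Here `Nat.nth Nat.Prime i` is the `(i+1)`-st prime (`Nat.nth Nat.Prime 0 = 2`). -/
def S₀ : Set ℕ :=
  {n : ℕ | ∃ t : ℕ, 1 ≤ t ∧ (∀ i < t, Nat.nth Nat.Prime i ∣ n) ∧
    (∀ i < t, ¬ (Nat.nth Nat.Prime i) ^ 2 ∣ n) ∧ ¬ Nat.nth Nat.Prime t ∣ n}

/-!
Let `d` be a period of `S₀` from `N` on, let `P` be the product of the first `d` primes and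
`q` the next prime, so `q > d`. Then `n₀ = P * c` lies in `S₀` (with `t = d`) as soon as `c` is
coprime to `P * q`, and `n₀` can be taken `≥ N`. Since `P * d` is prime to `q`, some
`n₀ + k * P * d` is divisible by `q ^ 2`; it is still divisible by `P`, and a number divisible by
the first `d` primes and by the square of the `(d+1)`-st is never in `S₀`, contradicting
periodicity.
-/

theorem mem_iff_add_mul_mem_of_periodic {S : Set ℕ} {N d : ℕ}
    (h : ∀ n, N ≤ n → (n ∈ S ↔ n + d ∈ S)) (m : ℕ) {n : ℕ} (hn : N ≤ n) :
    n ∈ S ↔ n + m * d ∈ S := by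
  induction m with
  | zero => simp
  | succ m ih => rw [ih, h _ (hn.trans (Nat.le_add_right _ _)), add_assoc, Nat.succ_mul]

theorem exists_dvd_add_mul_of_coprime {m D : ℕ} [NeZero m] (h : D.Coprime m) (n : ℕ) :
    ∃ k, m ∣ n + k * D := by
  refine ⟨(-(n : ZMod m) * (D : ZMod m)⁻¹).val, ?_⟩
  rw [← ZMod.natCast_eq_zero_iff]
  push_cast
  rw [ZMod.natCast_val, ZMod.cast_id', id]
  linear_combination (-(n : ZMod m)) * ZMod.coe_mul_inv_eq_one D h

theorem Nat.Prime.not_sq_dvd_mul_of_squarefree {p a c : ℕ} (hp : p.Prime) (ha : Squarefree a)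
    (hc : ¬ p ∣ c) : ¬ p ^ 2 ∣ a * c := by
  intro h
  have hpp : p * p ∣ a := by
    rw [← sq]
    exact ((hp.coprime_iff_not_dvd.mpr hc).pow_left 2).dvd_of_dvd_mul_right h
  exact hp.one_lt.ne' (Nat.isUnit_iff.mp (ha p hpp))

noncomputable def primeProd (t : ℕ) : ℕ := ∏ i ∈ Finset.range t, Nat.nth Nat.Prime i

theorem primeProd_succ (t : ℕ) : primeProd (t + 1) = primeProd t * Nat.nth Nat.Prime t :=
  Finset.prod_range_succ _ _

theorem primeProd_pos (t : ℕ) : 0 < primeProd t :=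
  Finset.prod_pos fun i _ => (Nat.prime_nth_prime i).pos

theorem nth_prime_dvd_primeProd_iff {i t : ℕ} :
    Nat.nth Nat.Prime i ∣ primeProd t ↔ i < t := by
  refine ⟨fun h => ?_, fun h => Finset.dvd_prod_of_mem _ (Finset.mem_range.mpr h)⟩
  obtain ⟨j, hj, hij⟩ := ((Nat.prime_nth_prime i).prime.dvd_finsetProd_iff _).mp h
  have hij : i = j := Nat.nth_injective Nat.infinite_setOfPred_prime
    ((Nat.prime_dvd_prime_iff_eq (Nat.prime_nth_prime i) (Nat.prime_nth_prime j)).mp hij)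
  exact hij ▸ Finset.mem_range.mp hj

theorem squarefree_primeProd (t : ℕ) : Squarefree (primeProd t) := by
  induction t with
  | zero => exact squarefree_one
  | succ t ih =>
    rw [primeProd_succ, Nat.squarefree_mul_iff]
    refine ⟨Nat.Coprime.symm ?_, ih, (Nat.prime_nth_prime t).squarefree⟩
    exact (Nat.prime_nth_prime t).coprime_iff_not_dvd.mpr
      (nth_prime_dvd_primeProd_iff.not.mpr (lt_irrefl t))

theorem primeProd_mul_mem_S₀ {t c : ℕ} (ht : 1 ≤ t) (hc : c.Coprime (primeProd (t + 1))) :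
    primeProd t * c ∈ S₀ := by
  have hndvd : ∀ i ≤ t, ¬ Nat.nth Nat.Prime i ∣ c := fun i hi hdvd =>
    (Nat.prime_nth_prime i).one_lt.ne'
      (Nat.eq_one_of_dvd_coprimes hc hdvd (nth_prime_dvd_primeProd_iff.mpr (Nat.lt_succ_of_le hi)))
  refine ⟨t, ht, fun i hi => dvd_mul_of_dvd_left (nth_prime_dvd_primeProd_iff.mpr hi) c,
    fun i hi => (Nat.prime_nth_prime i).not_sq_dvd_mul_of_squarefree (squarefree_primeProd t)
      (hndvd i hi.le), ?_⟩
  rw [(Nat.prime_nth_prime t).dvd_mul, nth_prime_dvd_primeProd_iff]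
  exact fun h => h.elim (lt_irrefl t) (hndvd t le_rfl)

theorem notMem_S₀_of_primeProd_dvd {t n : ℕ} (hP : primeProd t ∣ n)
    (hsq : Nat.nth Nat.Prime t ^ 2 ∣ n) : n ∉ S₀ := by
  rintro ⟨s, -, -, hsqfree, hnext⟩
  rcases lt_trichotomy s t with hlt | rfl | hgt
  · exact hnext ((nth_prime_dvd_primeProd_iff.mpr hlt).trans hP)
  · exact hnext ((dvd_pow_self _ two_ne_zero).trans hsq)
  · exact hsqfree t hgt hsq

theorem S₀_not_eventuallyPeriodic : ¬ EventuallyPeriodic S₀ := by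
  rintro ⟨N, d, hd, hper⟩
  have hq : (Nat.nth Nat.Prime d).Prime := Nat.prime_nth_prime d
  set c := 1 + primeProd (d + 1) * N
  set n₀ := primeProd d * c
  have hn₀ : n₀ ∈ S₀ :=
    primeProd_mul_mem_S₀ hd ((Nat.coprime_add_mul_left_left 1 _ N).mpr (Nat.coprime_one_left _))
  have hNn₀ : N ≤ n₀ := calc
    N ≤ c := le_add_left (Nat.le_mul_of_pos_left N (primeProd_pos (d + 1)))
    _ ≤ n₀ := Nat.le_mul_of_pos_left c (primeProd_pos d)
  have hcop : (primeProd d * d).Coprime (Nat.nth Nat.Prime d ^ 2) := by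
    refine Nat.Coprime.pow_right 2 (Nat.Coprime.symm ?_)
    rw [hq.coprime_iff_not_dvd, hq.dvd_mul, nth_prime_dvd_primeProd_iff]
    exact fun h => h.elim (lt_irrefl d) fun h =>
      (Nat.le_of_dvd hd h).not_gt (by linarith [Nat.add_two_le_nth_prime d])
  have : NeZero (Nat.nth Nat.Prime d ^ 2) := ⟨pow_ne_zero 2 hq.ne_zero⟩
  obtain ⟨k, hk⟩ := exists_dvd_add_mul_of_coprime hcop n₀
  have hmem := (mem_iff_add_mul_mem_of_periodic hper (k * primeProd d) hNn₀).mp hn₀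
  rw [mul_assoc] at hmem
  exact notMem_S₀_of_primeProd_dvd
    (dvd_add (dvd_mul_right _ c) (dvd_mul_of_dvd_right (dvd_mul_right _ d) k)) hk hmem
end

section
/- Karp's theorem for unary languages: if S ⊆ ℕ is not eventually periodic, then for infinitely many n, any eventually periodic set T that agrees with S on {0, 1, ..., n} (i.e., m ∈ S ↔ m ∈ T for all m ≤ n) must have period-plus-preperiod at least (n+3)/2; equivalently, any DFA over a unary alphabet accepting exactly { a^m : m ∈ S, m ≤ n } among strings of length ≤ n has at least (n+3)/2 states. -/
/-- A set of naturals is eventually periodic with preperiod `N` and period `d`. -/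
def EvPeriodicWith (T : Set ℕ) (N d : ℕ) : Prop :=
  1 ≤ d ∧ ∀ n : ℕ, N ≤ n → (n ∈ T ↔ n + d ∈ T)

/-! If the bound failed from some `M` on, then for every `n ≥ M` the prefix `S ∩ [0, n]` would have
a period `d` from some `N` on with `2 (N + d) ≤ n + 2`. Two such local periods, for `n` and `n + 1`,
overlap on a window long enough for the Fine–Wilf theorem, so the period found at `M` survives
each extension of the window by one; hence it is an eventual period of `S`. -/

section

variable {α : Type*} {f : ℕ → α} {d d' d₀ a a' b b' N N₀ : ℕ}

def HasPeriodOn (f : ℕ → α) (d a b : ℕ) : Prop :=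
  ∀ m, a ≤ m → m + d < b → f m = f (m + d)

theorem List.getElem?_map_range'_of_lt {k i : ℕ} (hi : i < k) :
    ((List.range' a k).map f)[i]? = some (f (a + i)) := by
  simp [List.getElem?_range' hi]

theorem hasPeriodOn_iff_hasPeriod :
    HasPeriodOn f d a b ↔ ((List.range' a (b - a)).map f).HasPeriod d := by
  rw [List.hasPeriod_iff_getElem?, List.length_map, List.length_range']
  constructor
  · intro h i hi
    rw [List.getElem?_map_range'_of_lt (by omega), List.getElem?_map_range'_of_lt (by omega),
      h (a + i) (by omega) (by omega), Nat.add_assoc]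
  · intro h m hm hmb
    have := h (m - a) (by omega)
    rw [List.getElem?_map_range'_of_lt (by omega), List.getElem?_map_range'_of_lt (by omega),
      Nat.add_sub_cancel' hm, ← Nat.add_assoc, Nat.add_sub_cancel' hm] at this
    exact Option.some_injective _ this

theorem HasPeriodOn.mono (h : HasPeriodOn f d a b) (ha : a ≤ a') (hb : b' ≤ b) :
    HasPeriodOn f d a' b' :=
  fun m hm hmb => h m (ha.trans hm) (hmb.trans_le hb)

theorem HasPeriodOn.gcd (h : HasPeriodOn f d a b) (h' : HasPeriodOn f d' a b)
    (hlen : a + d + d' ≤ b + d.gcd d') : HasPeriodOn f (d.gcd d') a b := by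
  rw [hasPeriodOn_iff_hasPeriod] at *
  exact h.gcd h' (by simp only [List.length_map, List.length_range']; omega)

theorem HasPeriodOn.eq_of_modEq (h : HasPeriodOn f d a b) {m m' : ℕ} (hm : m ∈ Set.Ico a b)
    (hm' : m' ∈ Set.Ico a b) (hmod : m ≡ m' [MOD d]) : f m = f m' := by
  rw [hasPeriodOn_iff_hasPeriod, List.hasPeriod_iff_forall_getElem?_mod, List.length_map,
    List.length_range'] at h
  obtain ⟨ham, hmb⟩ := hm
  obtain ⟨ham', hmb'⟩ := hm'
  have hsub : (m - a) % d = (m' - a) % d := Nat.ModEq.add_right_cancel' a (by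
    rwa [Nat.sub_add_cancel ham, Nat.sub_add_cancel ham'])
  have key := (h (m - a) (by omega)).trans (hsub ▸ (h (m' - a) (by omega)).symm)
  rw [List.getElem?_map_range'_of_lt (by omega), List.getElem?_map_range'_of_lt (by omega),
    Nat.add_sub_cancel' ham, Nat.add_sub_cancel' ham'] at key
  exact Option.some_injective _ key

theorem HasPeriodOn.succ_right (h₀ : HasPeriodOn f d₀ N₀ b) (h : HasPeriodOn f d N (b + 1))
    (hd : 0 < d) (hd₀ : 0 < d₀) (hsize : N + N₀ + d + d₀ ≤ b + 1) :
    HasPeriodOn f d₀ N₀ (b + 1) := by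
  intro m hm hmb
  rcases Nat.lt_or_ge (m + d₀) b with hlt | hge
  · exact h₀ m hm hlt
  have hmd₀ : m + d₀ = b := by omega
  -- Fine–Wilf on the overlap identifies `b - d₀` with `b - d`, which `h` identifies with `b`.
  set g := d.gcd d₀
  have hg : HasPeriodOn f g (max N N₀) b :=
    (h.mono (le_max_left _ _) (Nat.le_succ b)).gcd (h₀.mono (le_max_right _ _) le_rfl)
      (by have := Nat.gcd_pos_of_pos_left d₀ hd; omega)
  have hmod : m ≡ b - d [MOD g] := by
    refine Nat.ModEq.add_right_cancel (c := d₀) (d := d) ?_ ?_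
    · exact ((Nat.modEq_zero_iff_dvd.2 (Nat.gcd_dvd_right d d₀)).trans
        (Nat.modEq_zero_iff_dvd.2 (Nat.gcd_dvd_left d d₀)).symm)
    · rw [hmd₀, Nat.sub_add_cancel (by omega)]
  calc f m = f (b - d) := hg.eq_of_modEq ⟨by omega, by omega⟩ ⟨by omega, by omega⟩ hmod
    _ = f (b - d + d) := h (b - d) (by omega) (by omega)
    _ = f (m + d₀) := by rw [hmd₀, Nat.sub_add_cancel (by omega)]

end

theorem EvPeriodicWith.hasPeriodOn_of_agree {S T : Set ℕ} {N d n : ℕ} (hT : EvPeriodicWith T N d)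
    (hagree : ∀ m, m ≤ n → (m ∈ S ↔ m ∈ T)) : HasPeriodOn (· ∈ S) d N (n + 1) := fun m hm hmd =>
  propext <| (hagree m (by omega)).trans <| (hT.2 m hm).trans (hagree (m + d) (by omega)).symm

theorem evPeriodicWith_of_hasPeriodOn {S : Set ℕ} {N d M : ℕ} (hd : 1 ≤ d)
    (h : ∀ n, M ≤ n → HasPeriodOn (· ∈ S) d N (n + 1)) : EvPeriodicWith S N d :=
  ⟨hd, fun m hm => (h (m + d + M) (by omega) m hm (by omega)).to_iff⟩

theorem karp_unary (S : Set ℕ) (hS : ¬ ∃ N d : ℕ, EvPeriodicWith S N d) :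
    ∀ M : ℕ, ∃ n : ℕ, M ≤ n ∧ ∀ (T : Set ℕ) (N d : ℕ), EvPeriodicWith T N d →
      (∀ m : ℕ, m ≤ n → (m ∈ S ↔ m ∈ T)) → ((n : ℝ) + 3) / 2 ≤ N + d := by
  by_contra! ⟨M, hM⟩
  have short : ∀ n, M ≤ n →
      ∃ N d, 0 < d ∧ 2 * (N + d) ≤ n + 2 ∧ HasPeriodOn (· ∈ S) d N (n + 1) := by
    intro n hn
    obtain ⟨T, N, d, hT, hagree, hsize⟩ := hM n hn
    have : ((2 * (N + d) : ℕ) : ℝ) < (n + 3 : ℕ) := by push_cast; linarith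
    exact ⟨N, d, hT.1, Nat.lt_succ_iff.mp (by exact_mod_cast this), hT.hasPeriodOn_of_agree hagree⟩
  obtain ⟨N₀, d₀, hd₀, hsize₀, h₀⟩ := short M le_rfl
  refine hS ⟨N₀, d₀, evPeriodicWith_of_hasPeriodOn (M := M) hd₀ fun n hn => ?_⟩
  induction n, hn using Nat.le_induction with
  | base => exact h₀
  | succ n hn ih =>
    obtain ⟨N, d, hd, hsize, h⟩ := short (n + 1) (by omega)
    exact ih.succ_right h hd hd₀ (by omega)
end

section
/- For every n ≥ 1: n ∈ L_AM-complement (i.e., q(n) is not a power of 2) implies there exist s, t with 2^s < t < 2^(s+1), t = q(n), 2^s | n, and t ∤ n; moreover in that case t = q(n) ≤ C·log n for an absolute constant C and sufficiently large n. -/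
namespace Nat

theorem choose_dvd_lcmUpto {m k : ℕ} (hk : k ≤ m) : m.choose k ∣ lcmUpto m := by
  rw [← factorization_prime_le_iff_dvd (choose_pos hk).ne' (lcmUpto_ne_zero m)]
  intro p hp
  rw [factorization_lcmUpto m hp]
  exact factorization_choose_le_log

end Nat

section LeastNonDivisor

variable {m n k : ℕ}

theorem leastNonDivisor_spec (hn : n ≠ 0) : 2 ≤ leastNonDivisor n ∧ ¬ leastNonDivisor n ∣ n :=
  Nat.sInf_mem (s := {m : ℕ | 2 ≤ m ∧ ¬ m ∣ n})
    ⟨n + 1, by omega, fun h => by have := Nat.le_of_dvd (by omega) h; omega⟩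

theorem dvd_of_lt_leastNonDivisor_s15 (hm : 0 < m) (hlt : m < leastNonDivisor n) : m ∣ n := by
  rcases Nat.lt_or_ge m 2 with hm1 | hm2
  · obtain rfl : m = 1 := by omega
    exact one_dvd n
  by_contra hndvd
  exact absurd (Nat.sInf_le (s := {m : ℕ | 2 ≤ m ∧ ¬ m ∣ n}) ⟨hm2, hndvd⟩) (not_le.mpr hlt)

theorem lcmUpto_dvd_of_lt_leastNonDivisor (hlt : m < leastNonDivisor n) : Nat.lcmUpto m ∣ n :=
  Finset.lcm_dvd fun d hd => by
    rw [Finset.mem_Icc] at hd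
    exact dvd_of_lt_leastNonDivisor_s15 hd.1 (hd.2.trans_lt hlt)

theorem two_pow_le_of_two_mul_lt_leastNonDivisor (hn : n ≠ 0) (hlt : 2 * k < leastNonDivisor n) :
    2 ^ k ≤ n := by
  rcases Nat.eq_zero_or_pos k with rfl | hk
  · simpa using Nat.one_le_iff_ne_zero.mpr hn
  have hbinom : k.centralBinom ≤ n :=
    Nat.le_of_dvd (by omega) <|
      (Nat.choose_dvd_lcmUpto (by omega)).trans (lcmUpto_dvd_of_lt_leastNonDivisor hlt)
  have htwo_mul : 2 * k ≤ n := Nat.le_of_dvd (by omega) (dvd_of_lt_leastNonDivisor_s15 (by omega) hlt)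
  refine (Nat.pow_le_pow_iff_left two_ne_zero).mp ?_
  calc (2 ^ k) ^ 2 = 4 ^ k := by rw [← pow_mul, mul_comm, pow_mul]; norm_num
    _ ≤ 2 * k * k.centralBinom := Nat.four_pow_le_two_mul_self_mul_centralBinom k hk
    _ ≤ n ^ 2 := by rw [sq]; exact Nat.mul_le_mul htwo_mul hbinom

theorem leastNonDivisor_le_four_mul_log (hn : 2 ≤ n) : leastNonDivisor n ≤ 4 * Nat.log 2 n := by
  have hq := (leastNonDivisor_spec (n := n) (by omega)).1
  have hk : (leastNonDivisor n - 1) / 2 ≤ Nat.log 2 n :=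
    Nat.le_log_of_pow_le one_lt_two <|
      two_pow_le_of_two_mul_lt_leastNonDivisor (by omega) (by omega)
  have hlog : 1 ≤ Nat.log 2 n := Nat.le_log_of_pow_le one_lt_two (by simpa using hn)
  omega

theorem leastNonDivisor_le_four_mul_logb (hn : 2 ≤ n) :
    (leastNonDivisor n : ℝ) ≤ 4 * Real.logb 2 n :=
  calc (leastNonDivisor n : ℝ) ≤ 4 * (Nat.log 2 n : ℕ) := by
        exact_mod_cast leastNonDivisor_le_four_mul_log hn
    _ ≤ 4 * Real.logb 2 n := by gcongr; exact_mod_cast Real.natLog_le_logb n 2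

end LeastNonDivisor

theorem exists_two_pow_lt_lt_two_pow_succ {m : ℕ} (hm : 2 ≤ m)
    (hpow : ¬ ∃ k : ℕ, 1 ≤ k ∧ m = 2 ^ k) :
    ∃ s, 1 ≤ s ∧ 2 ^ s < m ∧ m < 2 ^ (s + 1) := by
  have hle : 2 ^ Nat.log 2 m ≤ m := Nat.pow_log_le_self 2 (by omega)
  have hs : 1 ≤ Nat.log 2 m := Nat.le_log_of_pow_le one_lt_two (by simpa using hm)
  refine ⟨Nat.log 2 m, hs, lt_of_le_of_ne hle fun h => hpow ⟨_, hs, h.symm⟩, ?_⟩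
  exact Nat.lt_pow_succ_log_self one_lt_two m

theorem complement_LAM_characterization :
    (∀ n : ℕ, 1 ≤ n → (¬ ∃ k : ℕ, 1 ≤ k ∧ leastNonDivisor n = 2 ^ k) →
      ∃ s t : ℕ, 1 ≤ s ∧ 2 ^ s < t ∧ t < 2 ^ (s + 1) ∧ t = leastNonDivisor n ∧
        2 ^ s ∣ n ∧ ¬ t ∣ n) ∧
    ∃ C : ℝ, 0 < C ∧ ∃ N : ℕ, ∀ n : ℕ, N ≤ n →
      (¬ ∃ k : ℕ, 1 ≤ k ∧ leastNonDivisor n = 2 ^ k) →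
      (leastNonDivisor n : ℝ) ≤ C * Real.log n := by
  refine ⟨fun n hn hpow => ?_, 4 / Real.log 2, by positivity, 2, fun n hn _ => ?_⟩
  · obtain ⟨hq, hndvd⟩ := leastNonDivisor_spec (n := n) (by omega)
    obtain ⟨s, hs, hlt, hgt⟩ := exists_two_pow_lt_lt_two_pow_succ hq hpow
    exact ⟨s, _, hs, hlt, hgt, rfl, dvd_of_lt_leastNonDivisor_s15 (by positivity) hlt, hndvd⟩
  · calc (leastNonDivisor n : ℝ) ≤ 4 * Real.logb 2 n := leastNonDivisor_le_four_mul_logb hn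
      _ = 4 / Real.log 2 * Real.log n := by rw [Real.logb]; ring
end

section
/- The set { n ∈ ℕ : q(n) is NOT a power of 2 } (complement of the Alt–Mehlhorn set) is not eventually periodic. -/
theorem leastNonDivisor_eq_of_s17 {n v : ℕ} (hv : 2 ≤ v) (hvn : ¬ v ∣ n)
    (hdvd : ∀ m, 2 ≤ m → m < v → m ∣ n) : leastNonDivisor n = v :=
  le_antisymm (Nat.sInf_le ⟨hv, hvn⟩)
    (le_csInf ⟨v, hv, hvn⟩ fun _ hm ↦ not_lt.1 fun hlt ↦ hm.2 (hdvd _ hm.1 hlt))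

namespace Nat

theorem dvd_lcmUpto {m n : ℕ} (hm : 1 ≤ m) (hmn : m ≤ n) : m ∣ lcmUpto n :=
  Finset.dvd_lcm (Finset.mem_Icc.2 ⟨hm, hmn⟩)

theorem le_lcmUpto (n : ℕ) : n ≤ lcmUpto n := by
  rcases n.eq_zero_or_pos with rfl | hn
  · exact Nat.zero_le _
  · exact Nat.le_of_dvd (lcmUpto_pos n) (dvd_lcmUpto hn le_rfl)

theorem not_dvd_lcmUpto_pred {v : ℕ} (hv : IsPrimePow v) : ¬ v ∣ lcmUpto (v - 1) := by
  obtain ⟨p, k, hp, hk, rfl⟩ := (isPrimePow_nat_iff _).1 hv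
  rw [hp.pow_dvd_iff_le_factorization (lcmUpto_ne_zero _), factorization_lcmUpto _ hp, not_le]
  exact log_lt_of_lt_pow' hk.ne' (sub_one_lt (pow_pos hp.pos k).ne')

end Nat

theorem leastNonDivisor_lcmUpto_pred {v : ℕ} (hv : IsPrimePow v) :
    leastNonDivisor (Nat.lcmUpto (v - 1)) = v :=
  leastNonDivisor_eq_of_s17 hv.two_le (Nat.not_dvd_lcmUpto_pred hv)
    fun _ hm hmv ↦ Nat.dvd_lcmUpto (by omega) (by omega)

section Periodic

variable {S : Set ℕ} {N d : ℕ}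

theorem mem_iff_mem_add_mul (hS : ∀ n, N ≤ n → (n ∈ S ↔ n + d ∈ S)) {n : ℕ} (hn : N ≤ n) :
    ∀ j, n ∈ S ↔ n + j * d ∈ S
  | 0 => by simp
  | j + 1 => by
    rw [mem_iff_mem_add_mul hS hn j, hS _ (hn.trans (Nat.le_add_right _ _)), add_one_mul,
      add_assoc]

theorem mem_iff_mem_of_modEq (hS : ∀ n, N ≤ n → (n ∈ S ↔ n + d ∈ S)) {m n : ℕ} (hm : N ≤ m)
    (hn : N ≤ n) (hmn : m ≡ n [MOD d]) : m ∈ S ↔ n ∈ S := by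
  wlog hle : m ≤ n generalizing m n
  · exact (this hn hm hmn.symm (le_of_not_ge hle)).symm
  obtain ⟨j, hj⟩ := (Nat.modEq_iff_dvd' hle).1 hmn
  rw [mem_iff_mem_add_mul hS hm j, mul_comm, ← hj, Nat.add_sub_cancel' hle]

end Periodic

theorem complement_altMehlhorn_not_eventuallyPeriodic :
    ¬ EventuallyPeriodic {n : ℕ | 1 ≤ n ∧ ¬ ∃ k : ℕ, 1 ≤ k ∧ leastNonDivisor n = 2 ^ k} := by
  rintro ⟨N, d, hd, hS⟩
  obtain ⟨p, hpN, hp⟩ := Nat.exists_infinite_primes (N + d + 3)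
  set K := N + d + 3 with hK
  have hKpow : K < 2 ^ K := Nat.lt_two_pow_self
  have hmultiple : ∀ v, d < v → Nat.lcmUpto (v - 1) ≡ 0 [MOD d] := fun v hv ↦
    Nat.modEq_zero_iff_dvd.2 (Nat.dvd_lcmUpto (by omega) (by omega))
  have hlarge : ∀ v, K ≤ v → N ≤ Nat.lcmUpto (v - 1) := fun v hv ↦
    le_trans (by omega) (Nat.le_lcmUpto _)
  have hiff := mem_iff_mem_of_modEq hS (hlarge p hpN) (hlarge (2 ^ K) hKpow.le)
    ((hmultiple p (by omega)).trans (hmultiple (2 ^ K) (by omega)).symm)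
  have hodd : p ≠ 2 := by omega
  refine (hiff.1 ⟨Nat.lcmUpto_pos _, ?_⟩).2 ⟨K, by omega,
    leastNonDivisor_lcmUpto_pred (Nat.prime_two.isPrimePow.pow (by omega))⟩
  rintro ⟨k, hk, hpk⟩
  rw [leastNonDivisor_lcmUpto_pred hp.isPrimePow] at hpk
  exact hodd ((Nat.prime_dvd_prime_iff_eq Nat.prime_two hp).1 (hpk ▸ dvd_pow_self 2 (by omega))).symm
end
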